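/- arXiv:2306.03466 — 7 statements merged into one kernel-verified Lean document; each statement's English description precedes it below -/
import Mathlib

section
/- Let y ∈ ℝᵐ with y_j ≥ 0 for all j, α > 0, and A ∈ ℝ^{m×n} with nonnegative entries such that Ax ∈ ℝᵐ₊₊ whenever x ∈ ℝⁿ₊₊. Define the Poisson data-fidelity f(x) = ∑_{j=1}^m [y_j log(y_j/(α(Ax)_j)) + α(Ax)_j − y_j] and Burg's entropy h(x) = −∑_{i=1}^n log(x_i). Then for every L ≥ ‖y‖₁ = ∑_j y_j, the function L·h − f is convex on ℝⁿ₊₊. -/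
/-!
On the positive orthant, up to an additive constant,
`L h - f = (L - ‖y‖₁) h + ∑ⱼ yⱼ (log (Ax)ⱼ - ∑ᵢ log xᵢ) - α ∑ⱼ (Ax)ⱼ`.
The first term is convex because `L ≥ ‖y‖₁` and the last one is linear. For a nonnegative row
`a`, `log ⟨a, x⟩ - ∑ᵢ log xᵢ = log ∑ᵢ aᵢ ∏_{k ≠ i} xₖ⁻¹` is the logarithm of a nonnegative
combination of log-convex functions, hence convex: by Hölder's inequality, log-convexity is
preserved under such combinations.
-/

open Finset Real

theorem ConvexOn.sum {𝕜 E β ι : Type*} [Semiring 𝕜] [PartialOrder 𝕜] [AddCommMonoid E]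
    [AddCommMonoid β] [PartialOrder β] [IsOrderedAddMonoid β] [SMul 𝕜 E] [Module 𝕜 β]
    {s : Set E} (hs : Convex 𝕜 s) (t : Finset ι) {f : ι → E → β}
    (hf : ∀ i ∈ t, ConvexOn 𝕜 s (f i)) : ConvexOn 𝕜 s fun x => ∑ i ∈ t, f i x := by
  classical
  induction t using Finset.induction_on with
  | empty => simpa using convexOn_const 0 hs
  | insert i t hi ih =>
    simp only [Finset.sum_insert hi]
    exact (hf i (mem_insert_self i t)).add (ih fun j hj => hf j (mem_insert_of_mem hj))

theorem sum_mul_rpow_mul_rpow_le {ι : Type*} (s : Finset ι) {a b c : ι → ℝ} {θ τ : ℝ}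
    (hθ : 0 ≤ θ) (hτ : 0 ≤ τ) (hθτ : θ + τ = 1)
    (ha : ∀ i ∈ s, 0 ≤ a i) (hb : ∀ i ∈ s, 0 ≤ b i) (hc : ∀ i ∈ s, 0 ≤ c i)
    (hB : 0 < ∑ i ∈ s, a i * b i) (hC : 0 < ∑ i ∈ s, a i * c i) :
    ∑ i ∈ s, a i * (b i ^ θ * c i ^ τ) ≤
      (∑ i ∈ s, a i * b i) ^ θ * (∑ i ∈ s, a i * c i) ^ τ := by
  set B := ∑ i ∈ s, a i * b i
  set C := ∑ i ∈ s, a i * c i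
  have hBθ : 0 < B ^ θ := rpow_pos_of_pos hB θ
  have hCτ : 0 < C ^ τ := rpow_pos_of_pos hC τ
  have hterm : ∀ i ∈ s, b i ^ θ * c i ^ τ ≤ B ^ θ * C ^ τ * (θ / B * b i + τ / C * c i) := by
    intro i hi
    have hgm := geom_mean_le_arith_mean2_weighted hθ hτ
      (div_nonneg (hb i hi) hB.le) (div_nonneg (hc i hi) hC.le) hθτ
    rw [div_rpow (hb i hi) hB.le, div_rpow (hc i hi) hC.le] at hgm
    calc b i ^ θ * c i ^ τ = B ^ θ * C ^ τ * (b i ^ θ / B ^ θ * (c i ^ τ / C ^ τ)) := by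
          field_simp
      _ ≤ B ^ θ * C ^ τ * (θ / B * b i + τ / C * c i) := by
          gcongr
          exact hgm.trans_eq (by ring)
  calc ∑ i ∈ s, a i * (b i ^ θ * c i ^ τ)
      ≤ ∑ i ∈ s, a i * (B ^ θ * C ^ τ * (θ / B * b i + τ / C * c i)) :=
        sum_le_sum fun i hi => mul_le_mul_of_nonneg_left (hterm i hi) (ha i hi)
    _ = B ^ θ * C ^ τ * (θ / B * B + τ / C * C) := by
        simp only [B, C, mul_sum, ← sum_add_distrib]
        exact sum_congr rfl fun i _ => by ring
    _ = B ^ θ * C ^ τ := by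
        rw [div_mul_cancel₀ θ hB.ne', div_mul_cancel₀ τ hC.ne', hθτ, mul_one]

section LogConvex

variable {E : Type*} [AddCommMonoid E] [SMul ℝ E] {s : Set E}

theorem convexOn_log_comp_iff {f : E → ℝ} (hpos : ∀ x ∈ s, 0 < f x) :
    ConvexOn ℝ s (log ∘ f) ↔ Convex ℝ s ∧ ∀ ⦃u⦄, u ∈ s → ∀ ⦃v⦄, v ∈ s → ∀ ⦃θ τ : ℝ⦄,
      0 ≤ θ → 0 ≤ τ → θ + τ = 1 → f (θ • u + τ • v) ≤ f u ^ θ * f v ^ τ := by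
  refine and_congr_right fun hs => forall₂_congr fun u hu => forall₂_congr fun v hv =>
    forall₂_congr fun θ τ => forall₃_congr fun hθ hτ hθτ => ?_
  have hu' := rpow_pos_of_pos (hpos u hu) θ
  have hv' := rpow_pos_of_pos (hpos v hv) τ
  rw [← log_le_log_iff (hpos _ (hs hu hv hθ hτ hθτ)) (mul_pos hu' hv'),
    log_mul hu'.ne' hv'.ne', log_rpow (hpos u hu), log_rpow (hpos v hv)]
  rfl

theorem convexOn_log_sum_mul {ι : Type*} (hs : Convex ℝ s) (t : Finset ι) {a : ι → ℝ}
    {f : ι → E → ℝ} (ha : ∀ i ∈ t, 0 ≤ a i) (hfpos : ∀ i ∈ t, ∀ x ∈ s, 0 < f i x)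
    (hf : ∀ i ∈ t, ConvexOn ℝ s (log ∘ f i)) (hpos : ∀ x ∈ s, 0 < ∑ i ∈ t, a i * f i x) :
    ConvexOn ℝ s fun x => log (∑ i ∈ t, a i * f i x) := by
  refine (convexOn_log_comp_iff (f := fun x => ∑ i ∈ t, a i * f i x) hpos).2
    ⟨hs, fun u hu v hv θ τ hθ hτ hθτ => ?_⟩
  calc ∑ i ∈ t, a i * f i (θ • u + τ • v)
      ≤ ∑ i ∈ t, a i * (f i u ^ θ * f i v ^ τ) :=
        sum_le_sum fun i hi => mul_le_mul_of_nonneg_left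
          (((convexOn_log_comp_iff (hfpos i hi)).1 (hf i hi)).2 hu hv hθ hτ hθτ) (ha i hi)
    _ ≤ (∑ i ∈ t, a i * f i u) ^ θ * (∑ i ∈ t, a i * f i v) ^ τ :=
        sum_mul_rpow_mul_rpow_le t hθ hτ hθτ ha (fun i hi => (hfpos i hi u hu).le)
          (fun i hi => (hfpos i hi v hv).le) (hpos u hu) (hpos v hv)

end LogConvex

section PosOrthant

variable {ι : Type*}

theorem convex_pos_orthant : Convex ℝ {x : ι → ℝ | ∀ i, 0 < x i} := by
  simpa [Set.pi] using convex_pi (𝕜 := ℝ) (s := Set.univ) fun (_ : ι) _ => convex_Ioi (0 : ℝ)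

theorem convexOn_neg_sum_log (t : Finset ι) :
    ConvexOn ℝ {x : ι → ℝ | ∀ i, 0 < x i} fun x => -∑ k ∈ t, log (x k) := by
  simp only [← sum_neg_distrib]
  exact ConvexOn.sum convex_pos_orthant t fun k _ =>
    (strictConcaveOn_log_Ioi.concaveOn.neg.comp_linearMap
      (LinearMap.proj (R := ℝ) (φ := fun _ : ι => ℝ) k)).subset (fun x hx => hx k)
      convex_pos_orthant

theorem prod_erase_inv_eq {G₀ : Type*} [CommGroupWithZero G₀] [DecidableEq ι] {s : Finset ι}
    {x : ι → G₀} {i : ι} (hi : i ∈ s) (hx : x i ≠ 0) :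
    ∏ k ∈ s.erase i, (x k)⁻¹ = x i * ∏ k ∈ s, (x k)⁻¹ := by
  rw [← mul_prod_erase s (fun k => (x k)⁻¹) hi, mul_inv_cancel_left₀ hx]

theorem convexOn_log_sum_mul_sub_sum_log [Fintype ι] {a : ι → ℝ} (ha : ∀ i, 0 ≤ a i)
    (hpos : ∀ x : ι → ℝ, (∀ i, 0 < x i) → 0 < ∑ i, a i * x i) :
    ConvexOn ℝ {x : ι → ℝ | ∀ i, 0 < x i} fun x => log (∑ i, a i * x i) - ∑ i, log (x i) := by
  classical
  have hrepr : ∀ x : ι → ℝ, (∀ i, 0 < x i) →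
      ∑ i, a i * ∏ k ∈ univ.erase i, (x k)⁻¹ = (∑ i, a i * x i) * ∏ k, (x k)⁻¹ := by
    intro x hx
    simp only [prod_erase_inv_eq (mem_univ _) (hx _).ne', ← mul_assoc, ← sum_mul]
  have hconv : ConvexOn ℝ {x : ι → ℝ | ∀ i, 0 < x i}
      fun x => log (∑ i, a i * ∏ k ∈ univ.erase i, (x k)⁻¹) := by
    refine convexOn_log_sum_mul convex_pos_orthant univ (fun i _ => ha i)
      (fun i _ x hx => prod_pos fun k _ => inv_pos.2 (hx k))
      (fun i _ => (convexOn_neg_sum_log (univ.erase i)).congr fun x hx => ?_)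
      (fun x hx => ?_)
    · show -∑ k ∈ univ.erase i, log (x k) = log (∏ k ∈ univ.erase i, (x k)⁻¹)
      rw [log_prod fun k _ => inv_ne_zero (hx k).ne']
      simp only [log_inv, sum_neg_distrib]
    · rw [hrepr x hx]
      exact mul_pos (hpos x hx) (prod_pos fun k _ => inv_pos.2 (hx k))
  refine hconv.congr fun x hx => ?_
  have hprod : ∀ k ∈ univ, (x k)⁻¹ ≠ 0 := fun k _ => inv_ne_zero (hx k).ne'
  simp only [hrepr x hx, log_mul (hpos x hx).ne' (prod_ne_zero_iff.2 hprod), log_prod hprod,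
    log_inv, sum_neg_distrib, sub_eq_add_neg]

end PosOrthant

theorem mul_log_div_mul {y α t : ℝ} (hα : α ≠ 0) (ht : t ≠ 0) :
    y * log (y / (α * t)) = y * log (y / α) - y * log t := by
  rcases eq_or_ne y 0 with rfl | hy
  · simp
  · rw [← div_div, log_div (div_ne_zero hy hα) ht, mul_sub]

theorem stmt5 {m n : ℕ} (A : Matrix (Fin m) (Fin n) ℝ) (y : Fin m → ℝ) (α L : ℝ)
    (hy : ∀ j, 0 ≤ y j) (hα : 0 < α) (hA : ∀ j i, 0 ≤ A j i)
    (hpos : ∀ x : Fin n → ℝ, (∀ i, 0 < x i) → ∀ j, 0 < A.mulVec x j)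
    (hL : ∑ j, y j ≤ L) :
    ConvexOn ℝ {x : Fin n → ℝ | ∀ i, 0 < x i}
      (fun x => L * (-∑ i, Real.log (x i)) -
        ∑ j, (y j * Real.log (y j / (α * A.mulVec x j)) + α * A.mulVec x j - y j)) := by
  have hconv : ConvexOn ℝ {x : Fin n → ℝ | ∀ i, 0 < x i} fun x =>
      (L - ∑ j, y j) * (-∑ i, log (x i)) +
        ∑ j, (y j * (log (A.mulVec x j) - ∑ i, log (x i)) - α * A.mulVec x j) +
        ∑ j, (y j - y j * log (y j / α)) :=
    (((convexOn_neg_sum_log univ).smul (sub_nonneg.2 hL)).add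
      (ConvexOn.sum convex_pos_orthant univ fun j _ =>
        ((convexOn_log_sum_mul_sub_sum_log (hA j) fun x hx => hpos x hx j).smul (hy j)).sub
          ((α • (LinearMap.proj j ∘ₗ A.mulVecLin)).concaveOn convex_pos_orthant))).add_const _
  refine hconv.congr fun x hx => ?_
  simp only [mul_log_div_mul hα.ne' (hpos x hx _).ne', sum_add_distrib, sum_sub_distrib, mul_sub,
    ← sum_mul]
  ring
end

section
/- Let h : ℝⁿ → ℝ be C² and strictly convex with invertible Hessian on an open convex set U, with ∇h a diffeomorphism from U to V and inverse ∇h*. Let g : U → ℝ be differentiable and define ψ(y) = −h(y) + ⟨∇h(y), y⟩ − g(y) on U. Then the map B(y) := ∇(ψ ∘ ∇h*)(∇h(y)) satisfies B(y) = y − (∇²h(y))⁻¹ ∇g(y) for all y ∈ U. -/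
/-!
Write `ψ(w) = -h(w) + ⟪∇h(w), w⟫ - g(w)`. The terms `-∇h(y)` and `+∇h(y)` coming from `-h` and from
the inner product cancel, so `Dψ(y) = ⟪y, H ·⟫ - ⟪∇g(y), ·⟫`. By the inverse function theorem
`D(∇h*)(∇h(y)) = H⁻¹`, and the chain rule gives `D(ψ ∘ ∇h*)(∇h(y)) = ⟪y, ·⟫ - ⟪∇g(y), H⁻¹ ·⟫`.
Since `H` is a Hessian it is symmetric, hence so is `H⁻¹`, and the gradient is `y - H⁻¹ ∇g(y)`.
-/

open scoped RealInnerProductSpace Topology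

section

variable {E : Type*} [NormedAddCommGroup E] [InnerProductSpace ℝ E]

theorem ContinuousLinearEquiv.isSymmetric_symm {T : E ≃L[ℝ] E}
    (hT : (T : E →L[ℝ] E).IsSymmetric) : (T.symm : E →L[ℝ] E).IsSymmetric := fun u v => by
  simpa using (hT (T.symm u) (T.symm v)).symm

def bregmanPotential (h : E → ℝ) (grad : E → E) (g : E → ℝ) (w : E) : ℝ :=
  -h w + ⟪grad w, w⟫ - g w

theorem hasFDerivAt_bregmanPotential {h g : E → ℝ} {grad : E → E} {H : E →L[ℝ] E} {g' y : E}
    (hh : HasFDerivAt h (innerSL ℝ (grad y)) y) (hH : HasFDerivAt grad H y)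
    (hg : HasFDerivAt g (innerSL ℝ g') y) :
    HasFDerivAt (bregmanPotential h grad g) (innerSL ℝ y ∘L H - innerSL ℝ g') y := by
  refine ((hh.neg.add (hH.inner ℝ (hasFDerivAt_id y))).sub hg).congr_fderiv ?_
  ext v
  simp [real_inner_comm y]

variable [CompleteSpace E]

theorem isSymmetric_of_hasFDerivAt_gradient {h : E → ℝ} {grad : E → E} {H : E →L[ℝ] E}
    {y : E} (hgrad : ∀ᶠ w in 𝓝 y, HasGradientAt h (grad w) w) (hH : HasFDerivAt grad H y) :
    H.IsSymmetric := by
  intro u v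
  have := second_derivative_symmetric_of_eventually_of_real (f' := fun w => innerSL ℝ (grad w))
    (hgrad.mono fun w hw => hw.hasFDerivAt) ((innerSL ℝ).hasFDerivAt.comp y hH) u v
  change ⟪H u, v⟫ = ⟪H v, u⟫ at this
  exact this.trans (real_inner_comm _ _)

end

theorem stmt7_general {n : ℕ} (U V : Set (EuclideanSpace ℝ (Fin n)))
    (h g : EuclideanSpace ℝ (Fin n) → ℝ)
    (grad gradStar g' : EuclideanSpace ℝ (Fin n) → EuclideanSpace ℝ (Fin n))
    (H : EuclideanSpace ℝ (Fin n) → (EuclideanSpace ℝ (Fin n) ≃L[ℝ] EuclideanSpace ℝ (Fin n)))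
    (hUopen : IsOpen U) (hVopen : IsOpen V)
    (hgrad : ∀ y ∈ U, HasGradientAt h (grad y) y)
    (hHess : ∀ y ∈ U, HasFDerivAt grad ((H y : EuclideanSpace ℝ (Fin n) →L[ℝ] EuclideanSpace ℝ (Fin n))) y)
    (hmaps : Set.MapsTo grad U V)
    (hinv1 : ∀ y ∈ U, gradStar (grad y) = y)
    (hinv2 : ∀ z ∈ V, grad (gradStar z) = z)
    (hcont : ContinuousOn gradStar V)
    (hgradg : ∀ y ∈ U, HasGradientAt g (g' y) y) :
    ∀ y ∈ U, HasGradientAt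
      (fun z => -h (gradStar z) + ⟪grad (gradStar z), gradStar z⟫ - g (gradStar z))
      (y - (H y).symm (g' y)) (grad y) := by
  intro y hy
  have hV : V ∈ 𝓝 (grad y) := hVopen.mem_nhds (hmaps hy)
  have hHinv := ContinuousLinearEquiv.isSymmetric_symm <| isSymmetric_of_hasFDerivAt_gradient
    (Filter.mem_of_superset (hUopen.mem_nhds hy) hgrad) (hHess y hy)
  have hgradStar : HasFDerivAt gradStar ((H y).symm : _ →L[ℝ] _) (grad y) :=
    .of_local_left_inverse (hcont.continuousAt hV) (by rw [hinv1 y hy]; exact hHess y hy)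
      (Filter.mem_of_superset hV hinv2)
  have hψ := hasFDerivAt_bregmanPotential (hgrad y hy).hasFDerivAt (hHess y hy)
    (hgradg y hy).hasFDerivAt
  rw [← hinv1 y hy] at hψ
  rw [hasGradientAt_iff_hasFDerivAt]
  refine (hψ.comp _ hgradStar).congr_fderiv ?_
  rw [hinv1 y hy, ContinuousLinearMap.sub_comp, ContinuousLinearMap.comp_assoc,
    ContinuousLinearMap.innerSL_apply_comp_of_isSymmetric _ hHinv]
  ext v
  simp

theorem stmt7 {n : ℕ} (U V : Set (EuclideanSpace ℝ (Fin n)))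
    (h g : EuclideanSpace ℝ (Fin n) → ℝ)
    (grad gradStar g' : EuclideanSpace ℝ (Fin n) → EuclideanSpace ℝ (Fin n))
    (H : EuclideanSpace ℝ (Fin n) → (EuclideanSpace ℝ (Fin n) ≃L[ℝ] EuclideanSpace ℝ (Fin n)))
    (hUopen : IsOpen U) (hVopen : IsOpen V) (hUconv : Convex ℝ U)
    (hstrict : StrictConvexOn ℝ U h)
    (hgrad : ∀ y ∈ U, HasGradientAt h (grad y) y)
    (hHess : ∀ y ∈ U, HasFDerivAt grad ((H y : EuclideanSpace ℝ (Fin n) →L[ℝ] EuclideanSpace ℝ (Fin n))) y)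
    (hmaps : Set.MapsTo grad U V) (hsurj : Set.SurjOn grad U V)
    (hinv1 : ∀ y ∈ U, gradStar (grad y) = y)
    (hinv2 : ∀ z ∈ V, grad (gradStar z) = z)
    (hcont : ContinuousOn gradStar V)
    (hgradg : ∀ y ∈ U, HasGradientAt g (g' y) y) :
    ∀ y ∈ U, HasGradientAt
      (fun z => -h (gradStar z) + ⟪grad (gradStar z), gradStar z⟫ - g (gradStar z))
      (y - (H y).symm (g' y)) (grad y) :=
  stmt7_general U V h g grad gradStar g' H hUopen hVopen hgrad hHess hmaps hinv1 hinv2 hcont hgradg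
end

section
/- Let h : (0,∞) → ℝ be Burg's entropy h(y) = −log y in dimension one, g : (0,∞) → ℝ twice differentiable, and ψ(y) = −h(y) + h'(y)·y − g(y) = log y − 1 − g(y). Then ψ ∘ (h*)' (i.e., x ↦ ψ(−1/x) on (−∞,0)) is convex on (−∞, 0) if and only if for all y > 0, g''(y) ≤ (1 − 2y·g'(y))/y². -/
/-!
Substitute `y = -1/x`, which maps `(-∞, 0)` onto `(0, ∞)` with `dy/dx = y²`. Differentiating
`ψ(-1/x)` twice gives `y³ (y ψ''(y) + 2 ψ'(y))`, so convexity in `x` means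
`y ψ'' + 2 ψ' ≥ 0` for all `y > 0`. For `ψ = log - 1 - g` this quantity is
`1/y - y g'' - 2 g'`, which is `y` times `(1 - 2 y g')/y² - g''`.
-/

open Set

theorem convexOn_iff_hasDerivAt2_nonneg {s : Set ℝ} (hs_open : IsOpen s) (hs : Convex ℝ s)
    {f f' f'' : ℝ → ℝ} (hf : ∀ x ∈ s, HasDerivAt f (f' x) x)
    (hf' : ∀ x ∈ s, HasDerivAt f' (f'' x) x) :
    ConvexOn ℝ s f ↔ ∀ x ∈ s, 0 ≤ f'' x := by
  constructor
  · intro hconv x hx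
    have hmono : MonotoneOn f' s :=
      (hconv.monotoneOn_deriv fun y hy ↦ (hf y hy).differentiableAt).congr
        fun y hy ↦ (hf y hy).deriv
    exact (hf' x hx).hasDerivWithinAt.nonneg_of_monotoneOn (hs_open.preperfect x hx) hmono
  · intro h
    exact convexOn_of_hasDerivWithinAt2_nonneg hs
      (fun x hx ↦ (hf x hx).continuousAt.continuousWithinAt)
      (fun x hx ↦ (hf x (interior_subset hx)).hasDerivWithinAt)
      (fun x hx ↦ (hf' x (interior_subset hx)).hasDerivWithinAt)
      (fun x hx ↦ h x (interior_subset hx))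

theorem forall_neg_one_div_iff {P : ℝ → Prop} : (∀ x < 0, P (-1 / x)) ↔ ∀ y > 0, P y := by
  constructor
  · intro h y hy
    simpa [neg_div, div_neg] using h (-1 / y) (div_neg_of_neg_of_pos (by norm_num) hy)
  · exact fun h x hx ↦ h _ (div_pos_of_neg_of_neg (by norm_num) hx)

theorem hasDerivAt_neg_one_div {x : ℝ} (hx : x ≠ 0) :
    HasDerivAt (fun x ↦ -1 / x) ((-1 / x) ^ 2) x := by
  simp only [neg_div, one_div]
  exact (hasDerivAt_inv hx).fun_neg.congr_deriv (by ring)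

theorem HasDerivAt.comp_neg_one_div {ψ : ℝ → ℝ} {ψ' x : ℝ} (hx : x ≠ 0)
    (h : HasDerivAt ψ ψ' (-1 / x)) :
    HasDerivAt (fun x ↦ ψ (-1 / x)) (ψ' * (-1 / x) ^ 2) x :=
  h.comp x (hasDerivAt_neg_one_div hx)

theorem HasDerivAt.comp_neg_one_div_mul_sq {ψ' : ℝ → ℝ} {ψ'' x : ℝ} (hx : x ≠ 0)
    (h : HasDerivAt ψ' ψ'' (-1 / x)) :
    HasDerivAt (fun x ↦ ψ' (-1 / x) * (-1 / x) ^ 2)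
      ((-1 / x) ^ 3 * (-1 / x * ψ'' + 2 * ψ' (-1 / x))) x :=
  ((h.comp_neg_one_div hx).fun_mul ((hasDerivAt_neg_one_div hx).fun_pow 2)).congr_deriv
    (by push_cast; ring)

theorem convexOn_comp_neg_one_div_iff {ψ ψ' ψ'' : ℝ → ℝ}
    (hψ : ∀ y > 0, HasDerivAt ψ (ψ' y) y) (hψ' : ∀ y > 0, HasDerivAt ψ' (ψ'' y) y) :
    ConvexOn ℝ (Iio 0) (fun x ↦ ψ (-1 / x)) ↔ ∀ y > 0, 0 ≤ y * ψ'' y + 2 * ψ' y := by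
  have hpos : ∀ x < (0 : ℝ), 0 < -1 / x := fun x hx ↦ div_pos_of_neg_of_neg (by norm_num) hx
  rw [convexOn_iff_hasDerivAt2_nonneg isOpen_Iio (convex_Iio 0)
    (fun x hx ↦ (hψ _ (hpos x hx)).comp_neg_one_div hx.ne)
    (fun x hx ↦ (hψ' _ (hpos x hx)).comp_neg_one_div_mul_sq hx.ne)]
  simp only [mem_Iio]
  refine (forall_neg_one_div_iff (P := fun y ↦ 0 ≤ y ^ 3 * (y * ψ'' y + 2 * ψ' y))).trans
    (forall₂_congr fun y hy ↦ ?_)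
  exact mul_nonneg_iff_of_pos_left (pow_pos hy 3)

theorem stmt8 (g g' g'' : ℝ → ℝ)
    (hg : ∀ y > (0:ℝ), HasDerivAt g (g' y) y)
    (hg' : ∀ y > (0:ℝ), HasDerivAt g' (g'' y) y) :
    ConvexOn ℝ (Set.Iio (0 : ℝ)) (fun x => Real.log (-1 / x) - 1 - g (-1 / x)) ↔
      ∀ y > (0:ℝ), g'' y ≤ (1 - 2 * y * g' y) / y ^ 2 := by
  rw [convexOn_comp_neg_one_div_iff (ψ := fun y ↦ Real.log y - 1 - g y)
    (ψ' := fun y ↦ y⁻¹ - g' y) (ψ'' := fun y ↦ -(y ^ 2)⁻¹ - g'' y)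
    (fun y hy ↦ ((Real.hasDerivAt_log hy.ne').sub_const 1).sub (hg y hy))
    (fun y hy ↦ (hasDerivAt_inv hy.ne').sub (hg' y hy))]
  refine forall₂_congr fun y hy ↦ ?_
  have hψ : y * (-(y ^ 2)⁻¹ - g'' y) + 2 * (y⁻¹ - g' y) =
      y * ((1 - 2 * y * g' y) / y ^ 2 - g'' y) := by
    field_simp
    ring
  rw [hψ, mul_nonneg_iff_of_pos_left hy, sub_nonneg]
end

section
/- Let h : ℝⁿ → ℝ ∪ {+∞} be convex and differentiable on its open domain, let F : ℝⁿ → ℝ be differentiable on int dom(h), let R : ℝⁿ → ℝ ∪ {+∞} be proper, and suppose L·h − F is convex on a convex set C ⊆ int dom(h) containing x and x⁺. If τ > 0 satisfies τL < 1 and x⁺ minimizes u ↦ R(u) + ⟨u − x, ∇F(x)⟩ + (1/τ)D_h(u, x), then (F + R)(x⁺) ≤ (F + R)(x) − (1/τ − L)·D_h(x⁺, x). -/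
open scoped RealInnerProductSpace

/-!
Restricting a differentiable convex function to a segment turns convexity into the first-order
inequality `f x + f' (y - x) ≤ f y`. Applied to `L • h - F`, it gives the descent inequality
`F x⁺ ≤ F x + ⟪∇F x, x⁺ - x⟫ + L • D_h(x⁺, x)`; comparing the model at its minimiser `x⁺` with its
value at `u = x` bounds `R x⁺ + ⟪∇F x, x⁺ - x⟫ + D_h(x⁺, x) / τ` by `R x`, and adding the two
inequalities gives the claim.
-/

theorem ConvexOn.add_le_of_hasFDerivAt {E : Type*} [NormedAddCommGroup E] [NormedSpace ℝ E]
    {s : Set E} {f : E → ℝ} {f' : E →L[ℝ] ℝ} {x y : E}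
    (hf : ConvexOn ℝ s f) (hx : x ∈ s) (hy : y ∈ s) (hd : HasFDerivAt f f' x) :
    f x + f' (y - x) ≤ f y := by
  set φ : ℝ →ᵃ[ℝ] E := AffineMap.lineMap x y
  have hφ : HasDerivAt (f ∘ φ) (f' (y - x)) 0 := by
    rw [← AffineMap.lineMap_apply_zero (k := ℝ) x y] at hd
    exact hd.comp_hasDerivAt (0 : ℝ) (AffineMap.hasDerivAt_lineMap (a := x) (b := y) (x := 0))
  have hslope := (hf.comp_affineMap φ).le_slope_of_hasDerivAt (x := 0) (y := 1)
    (by simpa [φ]) (by simpa [φ]) one_pos hφ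
  simp only [slope, sub_zero, inv_one, Function.comp_apply, φ, AffineMap.lineMap_apply_zero,
    AffineMap.lineMap_apply_one, one_smul, vsub_eq_sub] at hslope
  linarith

section Bregman

variable {E : Type*} [NormedAddCommGroup E] [InnerProductSpace ℝ E] [CompleteSpace E]

def bregmanDiv (h : E → ℝ) (h' : E → E) (u x : E) : ℝ :=
  h u - h x - ⟪h' x, u - x⟫

theorem ConvexOn.le_add_inner_add_mul_bregmanDiv {s : Set E} {h F : E → ℝ} {h' F' : E → E}
    {L : ℝ} {x y : E} (hconv : ConvexOn ℝ s (fun u => L * h u - F u)) (hx : x ∈ s) (hy : y ∈ s)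
    (hh : HasGradientAt h (h' x) x) (hF : HasGradientAt F (F' x) x) :
    F y ≤ F x + ⟪F' x, y - x⟫ + L * bregmanDiv h h' y x := by
  have hd := (hh.hasFDerivAt.const_mul L).sub hF.hasFDerivAt
  have hfirst := hconv.add_le_of_hasFDerivAt hx hy hd
  simp only [sub_apply, smul_apply, InnerProductSpace.toDual_apply_apply, smul_eq_mul] at hfirst
  rw [bregmanDiv]
  linarith

end Bregman

theorem stmt11_general {n : ℕ} (C : Set (EuclideanSpace ℝ (Fin n)))
    (h F R : EuclideanSpace ℝ (Fin n) → ℝ)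
    (h' F' : EuclideanSpace ℝ (Fin n) → EuclideanSpace ℝ (Fin n))
    (L τ : ℝ) (x xp : EuclideanSpace ℝ (Fin n))
    (hx : x ∈ C) (hxp : xp ∈ C)
    (hh : ∀ u ∈ C, HasGradientAt h (h' u) u)
    (hF : ∀ u ∈ C, HasGradientAt F (F' u) u)
    (hconv : ConvexOn ℝ C (fun u => L * h u - F u))
    (hmin : ∀ u : EuclideanSpace ℝ (Fin n),
      R xp + ⟪xp - x, F' x⟫ + (1 / τ) * (h xp - h x - ⟪h' x, xp - x⟫)
        ≤ R u + ⟪u - x, F' x⟫ + (1 / τ) * (h u - h x - ⟪h' x, u - x⟫)) :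
    F xp + R xp ≤ F x + R x - (1 / τ - L) * (h xp - h x - ⟪h' x, xp - x⟫) := by
  have hdescent := hconv.le_add_inner_add_mul_bregmanDiv hx hxp (hh x hx) (hF x hx)
  have hstep := hmin x
  simp only [sub_self, inner_zero_left, inner_zero_right, mul_zero, add_zero] at hstep
  rw [bregmanDiv, real_inner_comm] at hdescent
  linarith

theorem stmt11 {n : ℕ} (C : Set (EuclideanSpace ℝ (Fin n)))
    (h F R : EuclideanSpace ℝ (Fin n) → ℝ)
    (h' F' : EuclideanSpace ℝ (Fin n) → EuclideanSpace ℝ (Fin n))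
    (L τ : ℝ) (x xp : EuclideanSpace ℝ (Fin n))
    (hC : Convex ℝ C) (hx : x ∈ C) (hxp : xp ∈ C)
    (hh : ∀ u ∈ C, HasGradientAt h (h' u) u)
    (hF : ∀ u ∈ C, HasGradientAt F (F' u) u)
    (hconv : ConvexOn ℝ C (fun u => L * h u - F u))
    (hτ : 0 < τ) (hτL : τ * L < 1)
    (hmin : ∀ u : EuclideanSpace ℝ (Fin n),
      R xp + ⟪xp - x, F' x⟫ + (1 / τ) * (h xp - h x - ⟪h' x, xp - x⟫)
        ≤ R u + ⟪u - x, F' x⟫ + (1 / τ) * (h u - h x - ⟪h' x, u - x⟫)) :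
    F xp + R xp ≤ F x + R x - (1 / τ - L) * (h xp - h x - ⟪h' x, xp - x⟫) :=
  stmt11_general C h F R h' F' L τ x xp hx hxp hh hF hconv hmin
end

section
/- Let y ∈ ℝᵐ with y_j ≥ 0, α > 0, and A ∈ ℝ^{m×n} with nonnegative entries, nonzero columns, and positive row sums applied to positive vectors (so (Ax)_j > 0 for x ∈ ℝⁿ₊₊). Let f(x) = ∑_j [y_j log(y_j/(α(Ax)_j)) + α(Ax)_j − y_j]. Then for every x ∈ ℝⁿ₊₊ and every coordinate i, 1 + λ·x_i·(∇f(x))_i ≥ 1 − λ‖y‖₁. In particular, if λ‖y‖₁ < 1 then the vector x/(1 + λ·x·∇f(x)) (componentwise) is well-defined and strictly positive. -/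
theorem stmt14 {m n : ℕ} (A : Matrix (Fin m) (Fin n) ℝ) (y : Fin m → ℝ) (α lam : ℝ)
    (hy : ∀ j, 0 ≤ y j) (hα : 0 < α) (hA : ∀ j i, 0 ≤ A j i)
    (hcol : ∀ i, ∃ j, A j i ≠ 0)
    (hpos : ∀ x : Fin n → ℝ, (∀ i, 0 < x i) → ∀ j, 0 < A.mulVec x j)
    (hlam : 0 ≤ lam) :
    ∀ x : Fin n → ℝ, (∀ i, 0 < x i) → ∀ i,
      (1 - lam * ∑ j, y j ≤
        1 + lam * x i * (∑ j, (α * A j i - y j * A j i / A.mulVec x j))) ∧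
      (lam * ∑ j, y j < 1 →
        0 < x i / (1 + lam * x i * (∑ j, (α * A j i - y j * A j i / A.mulVec x j)))) := by
  intro x hx i
  have hkey : -(∑ j, y j) ≤ x i * (∑ j, (α * A j i - y j * A j i / A.mulVec x j)) := by
    rw [Finset.mul_sum, ← Finset.sum_neg_distrib]
    apply Finset.sum_le_sum
    intro j _
    have hAx : 0 < A.mulVec x j := hpos x hx j
    have h1 : A j i * x i ≤ A.mulVec x j := by
      rw [Matrix.mulVec, dotProduct]
      exact Finset.single_le_sum (f := fun k => A j k * x k)
        (fun k _ => mul_nonneg (hA j k) (le_of_lt (hx k))) (Finset.mem_univ i)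
    have h2 : y j * A j i / A.mulVec x j * x i ≤ y j := by
      rw [div_mul_eq_mul_div, div_le_iff₀ hAx]
      calc y j * A j i * x i = y j * (A j i * x i) := by ring
        _ ≤ y j * A.mulVec x j := by
            exact mul_le_mul_of_nonneg_left h1 (hy j)
    nlinarith [mul_nonneg (mul_nonneg hα.le (hA j i)) (hx i).le]
  have hmain : 1 - lam * ∑ j, y j ≤
      1 + lam * x i * (∑ j, (α * A j i - y j * A j i / A.mulVec x j)) := by
    nlinarith [mul_le_mul_of_nonneg_left hkey hlam]
  refine ⟨hmain, fun hl => ?_⟩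
  exact div_pos (hx i) (lt_of_lt_of_le (by linarith) hmain)
end

section
/- Let ζ : 𝒴 → ℝⁿ, A : 𝒴 → 𝒵 a bijection between subsets of ℝⁿ, b : ℝⁿ → ℝ ∪ {+∞} with Im(ζ) ⊆ dom(b), and φ : ℝⁿ → ℝ ∪ {+∞} with Im(ζ) ⊆ dom(φ). Suppose for every y ∈ 𝒴, ζ(y) minimizes x ↦ −⟨x, A(y)⟩ + b(x) + φ(x) over ℝⁿ. Define ρ : 𝒵 → ℝ by ρ(z) = ⟨ζ(A⁻¹(z)), z⟩ − b(ζ(A⁻¹(z))) − φ(ζ(A⁻¹(z))). Then for all z, z' ∈ 𝒵, ρ(z') − ρ(z) ≥ ⟨ζ(A⁻¹(z)), z' − z⟩; i.e., ζ(A⁻¹(z)) is a subgradient of ρ at z. -/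
open scoped RealInnerProductSpace

theorem stmt18 {n : ℕ} (Y Z : Set (EuclideanSpace ℝ (Fin n)))
    (A Ainv ζ : EuclideanSpace ℝ (Fin n) → EuclideanSpace ℝ (Fin n))
    (b φ : EuclideanSpace ℝ (Fin n) → ℝ)
    (hbij : Set.BijOn A Y Z)
    (hAinv : ∀ z ∈ Z, Ainv z ∈ Y ∧ A (Ainv z) = z)
    (hAinv' : ∀ y ∈ Y, Ainv (A y) = y)
    (hmin : ∀ y ∈ Y, ∀ x : EuclideanSpace ℝ (Fin n),
      -⟪ζ y, A y⟫ + b (ζ y) + φ (ζ y) ≤ -⟪x, A y⟫ + b x + φ x) :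
    ∀ z ∈ Z, ∀ z' ∈ Z,
      ⟪ζ (Ainv z), z' - z⟫ ≤
        (⟪ζ (Ainv z'), z'⟫ - b (ζ (Ainv z')) - φ (ζ (Ainv z'))) -
        (⟪ζ (Ainv z), z⟫ - b (ζ (Ainv z)) - φ (ζ (Ainv z))) := by
  intro z hz z' hz'
  obtain ⟨hy', hA'⟩ := hAinv z' hz'
  have h := hmin (Ainv z') hy' (ζ (Ainv z))
  rw [hA'] at h
  rw [inner_sub_right]
  linarith
end

section
/- Let R > 0 and let g : ℝⁿ → ℝ be differentiable with ∇g Lipschitz continuous with constant Lip(g). Let h(x) = −∑_i log(x_i) be Burg's entropy. Then for L = Lip(g)·R², the function L·h − g is convex on (0, R]ⁿ; equivalently, for all x ∈ (0, R]ⁿ and d ∈ ℝⁿ (assuming g is C²), ⟨∇²g(x) d, d⟩ ≤ Lip(g)·R²·∑_i d_i²/x_i². -/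
/-!
A Lipschitz gradient gives `⟪∇g v - ∇g u, v - u⟫ ≤ Lg ‖v - u‖²`, while on `(0, R]ⁿ` Burg's
entropy satisfies `⟪∇h v - ∇h u, v - u⟫ = ∑ (vᵢ - uᵢ)² / (uᵢ vᵢ) ≥ ‖v - u‖² / R²` because
`uᵢ vᵢ ≤ R²`. So the gradient of `Lg R² h - g` is monotone on the convex box, and a function with
monotone gradient is convex, as one sees by restricting it to segments. The Hessian bound is the
infinitesimal form of the same comparison: `‖∇²g x‖ ≤ Lg` and `‖d‖² ≤ R² ∑ dᵢ² / xᵢ²`.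
-/

open scoped RealInnerProductSpace

open Set in
theorem convexOn_of_hasFDerivAt_of_monotone {E : Type*} [NormedAddCommGroup E] [NormedSpace ℝ E]
    {s : Set E} (hs : Convex ℝ s) {f : E → ℝ} {f' : E → E →L[ℝ] ℝ}
    (hf : ∀ x ∈ s, HasFDerivAt f (f' x) x)
    (hmono : ∀ x ∈ s, ∀ y ∈ s, 0 ≤ (f' y - f' x) (y - x)) :
    ConvexOn ℝ s f := by
  refine ⟨hs, fun x hx y hy a b ha hb hab => ?_⟩
  set γ : ℝ → E := ⇑(AffineMap.lineMap (k := ℝ) x y)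
  have hγs : ∀ t ∈ Icc (0 : ℝ) 1, γ t ∈ s := fun t ht => hs.lineMap_mem hx hy ht
  have hφ : ∀ t ∈ Icc (0 : ℝ) 1, HasDerivAt (f ∘ γ) (f' (γ t) (y - x)) t := fun t ht =>
    (hf _ (hγs t ht)).comp_hasDerivAt t AffineMap.hasDerivAt_lineMap
  have hφ_mono : MonotoneOn (fun t => f' (γ t) (y - x)) (Icc 0 1) := by
    intro t ht t' ht' htt'
    have hγ : γ t' - γ t = (t' - t) • (y - x) := by
      simp only [γ, AffineMap.lineMap_apply_module']; module
    have := hmono _ (hγs t ht) _ (hγs t' ht')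
    rw [hγ, map_smul, smul_eq_mul, sub_apply] at this
    rcases htt'.eq_or_lt with rfl | hlt
    · rfl
    · exact sub_nonneg.1 (nonneg_of_mul_nonneg_right this (sub_pos.2 hlt))
  have hconv : ConvexOn ℝ (Icc 0 1) (f ∘ γ) := by
    refine MonotoneOn.convexOn_of_deriv (convex_Icc 0 1)
      (fun t ht => (hφ t ht).continuousAt.continuousWithinAt)
      (fun t ht => (hφ t (interior_subset ht)).differentiableAt.differentiableWithinAt) ?_
    refine (hφ_mono.mono interior_subset).congr fun t ht => ?_
    exact ((hφ t (interior_subset ht)).deriv).symm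
  have := hconv.2 (left_mem_Icc.2 zero_le_one) (right_mem_Icc.2 zero_le_one) ha hb hab
  simpa [γ, AffineMap.lineMap_apply_module, ← eq_sub_of_add_eq hab] using this

theorem inner_sub_sub_le_of_lipschitzWith {E : Type*} [NormedAddCommGroup E]
    [InnerProductSpace ℝ E] {g' : E → E} {K : NNReal} (hlip : LipschitzWith K g') (u v : E) :
    ⟪g' v - g' u, v - u⟫ ≤ K * ‖v - u‖ ^ 2 :=
  calc ⟪g' v - g' u, v - u⟫ ≤ ‖g' v - g' u‖ * ‖v - u‖ := real_inner_le_norm _ _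
    _ ≤ K * ‖v - u‖ * ‖v - u‖ := by
        gcongr; simpa only [dist_eq_norm] using hlip.dist_le_mul v u
    _ = K * ‖v - u‖ ^ 2 := by ring

theorem inner_apply_self_le_of_lipschitzWith {E : Type*} [NormedAddCommGroup E]
    [InnerProductSpace ℝ E] {g' : E → E} {g'' : E →L[ℝ] E} {x : E} {K : NNReal}
    (hg'' : HasFDerivAt g' g'' x) (hlip : LipschitzWith K g') (d : E) :
    ⟪g'' d, d⟫ ≤ K * ‖d‖ ^ 2 :=
  calc ⟪g'' d, d⟫ ≤ ‖g'' d‖ * ‖d‖ := real_inner_le_norm _ _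
    _ ≤ K * ‖d‖ * ‖d‖ := by gcongr; exact g''.le_of_opNorm_le (hg''.le_of_lipschitz hlip) d
    _ = K * ‖d‖ ^ 2 := by ring

/-- Relative smoothness of `g` with respect to `h` in the sense of Bauschke–Bolte–Teboulle. -/
theorem convexOn_const_mul_sub_of_lipschitzWith_gradient {E : Type*} [NormedAddCommGroup E]
    [InnerProductSpace ℝ E] [CompleteSpace E] {s : Set E} (hs : Convex ℝ s)
    {h : E → ℝ} {h' : E → E →L[ℝ] ℝ} (hh : ∀ x ∈ s, HasFDerivAt h (h' x) x)
    {g : E → ℝ} {g' : E → E} (hg : ∀ x, HasGradientAt g (g' x) x)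
    {K : NNReal} (hlip : LipschitzWith K g') {c : ℝ}
    (hdom : ∀ u ∈ s, ∀ v ∈ s, K * ‖v - u‖ ^ 2 ≤ c * (h' v - h' u) (v - u)) :
    ConvexOn ℝ s (fun x => c * h x - g x) := by
  refine convexOn_of_hasFDerivAt_of_monotone hs
    (fun x hx => ((hh x hx).const_mul c).sub (hg x).hasFDerivAt) fun u hu v hv => ?_
  have hh_mono := hdom u hu v hv
  have hg_mono := inner_sub_sub_le_of_lipschitzWith hlip u v
  rw [inner_sub_left] at hg_mono
  simp only [sub_apply, smul_apply, smul_eq_mul, InnerProductSpace.toDual_apply_apply,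
    mul_sub] at hh_mono ⊢
  linarith

theorem EuclideanSpace.norm_sq_le_mul_sum_sq_div {ι : Type*} [Fintype ι] {c : ℝ} {w : ι → ℝ}
    (hw : ∀ i, 0 < w i ∧ w i ≤ c) (d : EuclideanSpace ℝ ι) :
    ‖d‖ ^ 2 ≤ c * ∑ i, d i ^ 2 / w i := by
  rw [EuclideanSpace.real_norm_sq_eq, Finset.mul_sum]
  refine Finset.sum_le_sum fun i _ => ?_
  rw [mul_div_assoc', le_div_iff₀ (hw i).1, mul_comm c]
  exact mul_le_mul_of_nonneg_left (hw i).2 (sq_nonneg _)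

section BurgEntropy

variable {ι : Type*} [Fintype ι]

noncomputable def burgEntropy (x : EuclideanSpace ℝ ι) : ℝ := -∑ i, Real.log (x i)

noncomputable def burgEntropyDeriv (x : EuclideanSpace ℝ ι) : EuclideanSpace ℝ ι →L[ℝ] ℝ :=
  -∑ i, (x i)⁻¹ • EuclideanSpace.proj i

theorem hasFDerivAt_burgEntropy {x : EuclideanSpace ℝ ι} (hx : ∀ i, x i ≠ 0) :
    HasFDerivAt burgEntropy (burgEntropyDeriv x) x :=
  (HasFDerivAt.fun_sum fun i _ => (PiLp.hasFDerivAt_apply (𝕜 := ℝ) 2 x i).log (hx i)).neg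

theorem burgEntropyDeriv_sub_apply {u v : EuclideanSpace ℝ ι} (hu : ∀ i, u i ≠ 0)
    (hv : ∀ i, v i ≠ 0) :
    (burgEntropyDeriv v - burgEntropyDeriv u) (v - u) = ∑ i, (v i - u i) ^ 2 / (u i * v i) := by
  simp only [burgEntropyDeriv, sub_apply, sum_apply, smul_apply,
    EuclideanSpace.coe_proj, PiLp.sub_apply, smul_eq_mul, neg_sub_neg, ← Finset.sum_sub_distrib]
  refine Finset.sum_congr rfl fun i _ => ?_
  field_simp [hu i, hv i]

end BurgEntropy

theorem EuclideanSpace.convex_setOf_forall_mem {ι : Type*} [Fintype ι] {t : Set ℝ}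
    (ht : Convex ℝ t) : Convex ℝ {x : EuclideanSpace ℝ ι | ∀ i, x i ∈ t} :=
  fun _ hu _ hv _ _ ha hb hab i => ht (hu i) (hv i) ha hb hab

theorem stmt19_general {n : ℕ} (R Lg : ℝ) (hLg : 0 ≤ Lg)
    (g : EuclideanSpace ℝ (Fin n) → ℝ)
    (g' : EuclideanSpace ℝ (Fin n) → EuclideanSpace ℝ (Fin n))
    (g'' : EuclideanSpace ℝ (Fin n) → (EuclideanSpace ℝ (Fin n) →L[ℝ] EuclideanSpace ℝ (Fin n)))
    (hg : ∀ x, HasGradientAt g (g' x) x)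
    (hlip : LipschitzWith (Real.toNNReal Lg) g')
    (hg'' : ∀ x, HasFDerivAt g' (g'' x) x) :
    ConvexOn ℝ {x : EuclideanSpace ℝ (Fin n) | ∀ i, 0 < x i ∧ x i ≤ R}
      (fun x => (Lg * R ^ 2) * (-∑ i, Real.log (x i)) - g x) ∧
    ∀ x : EuclideanSpace ℝ (Fin n), (∀ i, 0 < x i ∧ x i ≤ R) →
      ∀ d : EuclideanSpace ℝ (Fin n),
        ⟪g'' x d, d⟫ ≤ Lg * R ^ 2 * ∑ i, (d i) ^ 2 / (x i) ^ 2 := by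
  have hK : (Lg.toNNReal : ℝ) = Lg := Real.coe_toNNReal Lg hLg
  refine ⟨convexOn_const_mul_sub_of_lipschitzWith_gradient
    (EuclideanSpace.convex_setOf_forall_mem (convex_Ioc 0 R))
    (fun x hx => hasFDerivAt_burgEntropy fun i => (hx i).1.ne') hg hlip fun u hu v hv => ?_,
    fun x hx d => ?_⟩
  · have hw : ∀ i, 0 < u i * v i ∧ u i * v i ≤ R ^ 2 := fun i =>
      ⟨mul_pos (hu i).1 (hv i).1, by nlinarith [hu i, hv i]⟩
    rw [burgEntropyDeriv_sub_apply (fun i => (hu i).1.ne') (fun i => (hv i).1.ne'), hK, mul_assoc]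
    exact mul_le_mul_of_nonneg_left (EuclideanSpace.norm_sq_le_mul_sum_sq_div hw (v - u)) hLg
  · have hw : ∀ i, 0 < x i ^ 2 ∧ x i ^ 2 ≤ R ^ 2 := fun i =>
      ⟨pow_pos (hx i).1 2, pow_le_pow_left₀ (hx i).1.le (hx i).2 2⟩
    calc ⟪g'' x d, d⟫ ≤ Lg * ‖d‖ ^ 2 := hK ▸ inner_apply_self_le_of_lipschitzWith (hg'' x) hlip d
      _ ≤ Lg * R ^ 2 * ∑ i, d i ^ 2 / x i ^ 2 := by
        rw [mul_assoc]
        exact mul_le_mul_of_nonneg_left (EuclideanSpace.norm_sq_le_mul_sum_sq_div hw d) hLg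

theorem stmt19 {n : ℕ} (R Lg : ℝ) (hR : 0 < R) (hLg : 0 ≤ Lg)
    (g : EuclideanSpace ℝ (Fin n) → ℝ)
    (g' : EuclideanSpace ℝ (Fin n) → EuclideanSpace ℝ (Fin n))
    (g'' : EuclideanSpace ℝ (Fin n) → (EuclideanSpace ℝ (Fin n) →L[ℝ] EuclideanSpace ℝ (Fin n)))
    (hg : ∀ x, HasGradientAt g (g' x) x)
    (hlip : LipschitzWith (Real.toNNReal Lg) g')
    (hg'' : ∀ x, HasFDerivAt g' (g'' x) x) :
    ConvexOn ℝ {x : EuclideanSpace ℝ (Fin n) | ∀ i, 0 < x i ∧ x i ≤ R}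
      (fun x => (Lg * R ^ 2) * (-∑ i, Real.log (x i)) - g x) ∧
    ∀ x : EuclideanSpace ℝ (Fin n), (∀ i, 0 < x i ∧ x i ≤ R) →
      ∀ d : EuclideanSpace ℝ (Fin n),
        ⟪g'' x d, d⟫ ≤ Lg * R ^ 2 * ∑ i, (d i) ^ 2 / (x i) ^ 2 :=
  stmt19_general R Lg hLg g g' g'' hg hlip hg''
end
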